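/- arXiv:2512.00389 — 2 statements merged into one kernel-verified Lean document; each statement's English description precedes it below -/
import Mathlib

section
/- Let F : ℝ^k → ℝ be differentiable, bounded below with F* := inf F, satisfying the PŁ condition ‖∇F(z)‖² ≥ 2μ (F(z) − F*) for all z ∈ ℝ^k, with μ > 0. Let h : ℝ^d → ℝ^k be differentiable and suppose there is m > 0 such that ‖J_h(θ)ᵀ v‖ ≥ m‖v‖ for all θ ∈ ℝ^d and v ∈ ℝ^k. Then the composition F ∘ h satisfies the PŁ condition with constant μ·m²: for all θ, ‖∇(F∘h)(θ)‖² ≥ 2μm² (F(h(θ)) − inf_θ' F(h(θ'))). -/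
/-! The chain rule turns the gradient of `F ∘ h` at `θ` into `J_h(θ)ᵀ ∇F(h θ)`, whose squared norm
is at least `m² ‖∇F(h θ)‖² ≥ 2μm² (F (h θ) − inf F)`. Since `h` only restricts the points at which
`F` is evaluated, `inf F ≤ inf (F ∘ h)`, which gives the PŁ inequality for `F ∘ h`. -/

section Gradient

variable {E G : Type*} [NormedAddCommGroup E] [InnerProductSpace ℝ E] [CompleteSpace E]
  [NormedAddCommGroup G] [InnerProductSpace ℝ G] [CompleteSpace G]

theorem gradient_comp {f : G → ℝ} {h : E → G} {x : E} (hf : DifferentiableAt ℝ f (h x))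
    (hh : DifferentiableAt ℝ h x) :
    gradient (f ∘ h) x = (fderiv ℝ h x).adjoint (gradient f (h x)) := by
  refine ext_inner_right ℝ fun u => ?_
  rw [inner_gradient_left, fderiv_comp x hf hh, ContinuousLinearMap.adjoint_inner_left,
    inner_gradient_left]
  rfl

end Gradient

/-- If `F : ℝ^k → ℝ` is differentiable, bounded below, and satisfies
the PŁ condition `‖∇F(z)‖² ≥ 2μ(F(z) − inf F)`, and `h : ℝ^d → ℝ^k` is differentiable
with `‖J_h(θ)ᵀ v‖ ≥ m‖v‖` for all `θ, v` (smallest singular value at least `m > 0`),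
then `F ∘ h` satisfies the PŁ condition with constant `μ·m²`. -/
theorem stmt_13 {k d : ℕ} (F : EuclideanSpace ℝ (Fin k) → ℝ)
    (hF : Differentiable ℝ F) (hbdd : BddBelow (Set.range F))
    (μ : ℝ) (hμ : 0 < μ)
    (hPL : ∀ z, 2 * μ * (F z - ⨅ z', F z') ≤ ‖gradient F z‖ ^ 2)
    (h : EuclideanSpace ℝ (Fin d) → EuclideanSpace ℝ (Fin k))
    (hh : Differentiable ℝ h)
    (m : ℝ) (hm : 0 < m)
    (hsing : ∀ (θ : EuclideanSpace ℝ (Fin d)) (v : EuclideanSpace ℝ (Fin k)),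
      m * ‖v‖ ≤ ‖(fderiv ℝ h θ).adjoint v‖) :
    ∀ θ, 2 * (μ * m ^ 2) * (F (h θ) - ⨅ θ', F (h θ')) ≤ ‖gradient (F ∘ h) θ‖ ^ 2 := by
  intro θ
  set g := gradient F (h θ)
  have hinf : ⨅ z, F z ≤ ⨅ θ', F (h θ') :=
    ciInf_mono_of_forall_exists hbdd fun θ' => ⟨h θ', le_rfl⟩
  have hadj : m ^ 2 * ‖g‖ ^ 2 ≤ ‖(fderiv ℝ h θ).adjoint g‖ ^ 2 := by
    rw [← mul_pow]
    exact pow_le_pow_left₀ (by positivity) (hsing θ g) 2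
  rw [gradient_comp (hF _) (hh θ)]
  calc 2 * (μ * m ^ 2) * (F (h θ) - ⨅ θ', F (h θ'))
      = m ^ 2 * (2 * μ * (F (h θ) - ⨅ θ', F (h θ'))) := by ring
    _ ≤ m ^ 2 * (2 * μ * (F (h θ) - ⨅ z, F z)) := by gcongr
    _ ≤ m ^ 2 * ‖g‖ ^ 2 := by gcongr; exact hPL (h θ)
    _ ≤ _ := hadj
end

section
/- Let g : ℝ^m → ℝ be continuously differentiable, bounded below with g* := inf g attained on a nonempty closed set X* := argmin g, and suppose g satisfies the PŁ condition ‖∇g(x)‖² ≥ 2μ (g(x) − g*) for all x, with μ > 0. Then g satisfies quadratic growth: g(x) − g* ≥ (μ/2) · dist(x, X*)² for all x ∈ ℝ^m, i.e., dist(x, X*) ≤ √(2/μ) · √(g(x) − g*). -/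
/-!
Fix `x`, write `c = inf g`, and take `σ` with `2σ² < μ`. A minimizer `y` of the coercive function
`z ↦ √(g z - c) + σ‖z - x‖` satisfies `√(g y - c) ≤ √(g z - c) + σ‖z - y‖` for all `z`. If
`g y > c`, then `√(g - c)` is differentiable at `y`, and this one-sided bound gives
`‖∇g y‖ ≤ 2σ√(g y - c)`. That contradicts PŁ, so `y` is a global minimizer, and comparing with
`z = x` gives `σ · dist(x, X*) ≤ √(g x - c)`. Let `2σ²` tend to `μ`.
-/

open Metric Filter Topology Set

theorem HasFDerivAt.norm_le_of_eventually_le_add {E : Type*} [NormedAddCommGroup E]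
    [NormedSpace ℝ E] {f : E → ℝ} {f' : E →L[ℝ] ℝ} {x₀ : E} (hf : HasFDerivAt f f' x₀)
    {C : ℝ} (hC : 0 ≤ C) (hlow : ∀ᶠ x in 𝓝 x₀, f x₀ ≤ f x + C * ‖x - x₀‖) : ‖f'‖ ≤ C := by
  refine le_of_forall_pos_le_add fun ε ε0 => f'.opNorm_le_of_nhds_zero (by positivity) ?_
  rw [← map_add_left_nhds_zero x₀, eventually_map] at hlow
  have hlin : ∀ᶠ y in 𝓝 (0 : E), -((C + ε) * ‖y‖) ≤ f' y := by
    filter_upwards [Asymptotics.isLittleO_iff.1 (hasFDerivAt_iff_isLittleO_nhds_zero.1 hf) ε0,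
      hlow] with y hy hyC
    rw [add_sub_cancel_left] at hyC
    rw [Real.norm_eq_abs] at hy
    linarith [le_abs_self (f (x₀ + y) - f x₀ - f' y)]
  filter_upwards [hlin, (continuous_neg.tendsto' (0 : E) 0 neg_zero).eventually hlin] with y hy hny
  rw [map_neg, norm_neg] at hny
  exact abs_le.2 ⟨hy, by linarith⟩

variable {E : Type*} [NormedAddCommGroup E] [InnerProductSpace ℝ E]

theorem sq_norm_gradient_le_of_eventually_sqrt_le [CompleteSpace E] {g : E → ℝ} {y : E}
    {c σ : ℝ} (hg : DifferentiableAt ℝ g y) (hy : c < g y) (hσ : 0 ≤ σ)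
    (hlow : ∀ᶠ z in 𝓝 y, √(g y - c) ≤ √(g z - c) + σ * ‖z - y‖) :
    ‖gradient g y‖ ^ 2 ≤ 4 * σ ^ 2 * (g y - c) := by
  have hderiv := ((hg.hasFDerivAt.sub_const c).sqrt (sub_pos.2 hy).ne').norm_le_of_eventually_le_add
    hσ hlow
  rw [norm_smul, Real.norm_eq_abs, abs_of_pos (by positivity), one_div,
    inv_mul_le_iff₀ (by positivity)] at hderiv
  have hgrad : ‖gradient g y‖ = ‖fderiv ℝ g y‖ := (InnerProductSpace.toDual ℝ E).symm.norm_map _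
  calc ‖gradient g y‖ ^ 2 ≤ (2 * √(g y - c) * σ) ^ 2 := by
        rw [hgrad]; gcongr
    _ = 4 * σ ^ 2 * (g y - c) := by
        rw [mul_pow, mul_pow, Real.sq_sqrt (sub_pos.2 hy).le]; ring

theorem exists_eq_and_mul_dist_le_sqrt_of_PL [ProperSpace E] {g : E → ℝ}
    (hg : Differentiable ℝ g) {c μ σ : ℝ} (hc : ∀ z, c ≤ g z)
    (hPL : ∀ z, 2 * μ * (g z - c) ≤ ‖gradient g z‖ ^ 2) (hσ : 0 < σ) (hσμ : 2 * σ ^ 2 < μ)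
    (x : E) : ∃ y, g y = c ∧ σ * dist x y ≤ √(g x - c) := by
  set F : E → ℝ := fun z => √(g z - c) + σ * dist z x
  have hF_coercive : Tendsto F (cocompact E) atTop :=
    tendsto_atTop_mono (fun z => le_add_of_nonneg_left (Real.sqrt_nonneg _))
      ((tendsto_dist_right_cocompact_atTop x).const_mul_atTop hσ)
  have hF_cont : Continuous F := by have := hg.continuous; fun_prop
  obtain ⟨y, hy⟩ := hF_cont.exists_forall_le hF_coercive
  have hFxy : σ * dist x y ≤ √(g x - c) := by
    have := hy x
    simp only [F, dist_self, mul_zero, add_zero, dist_comm y x] at this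
    linarith [Real.sqrt_nonneg (g y - c)]
  refine ⟨y, (hc y).antisymm' (not_lt.1 fun hcy => ?_), hFxy⟩
  have hlow : ∀ z, √(g y - c) ≤ √(g z - c) + σ * ‖z - y‖ := fun z => by
    have := hy z
    have := dist_triangle z y x
    simp only [F, ← dist_eq_norm] at *
    nlinarith
  have hgrad := sq_norm_gradient_le_of_eventually_sqrt_le (hg y) hcy hσ.le
    (Eventually.of_forall hlow)
  nlinarith [hPL y, sub_pos.2 hcy]

theorem mul_infDist_sq_le_of_PL [ProperSpace E] {g : E → ℝ} (hg : Differentiable ℝ g)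
    {c μ : ℝ} (hμ : 0 < μ) (hc : ∀ z, c ≤ g z)
    (hPL : ∀ z, 2 * μ * (g z - c) ≤ ‖gradient g z‖ ^ 2) (x : E) :
    μ / 2 * infDist x {y | g y = c} ^ 2 ≤ g x - c := by
  have hgrowth : ∀ t ∈ Ioo 0 (μ / 2), t * infDist x {y | g y = c} ^ 2 ≤ g x - c := by
    rintro t ⟨ht, htμ⟩
    obtain ⟨y, hyc, hy⟩ := exists_eq_and_mul_dist_le_sqrt_of_PL hg hc hPL (Real.sqrt_pos.2 ht)
      (by rw [Real.sq_sqrt ht.le]; linarith) x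
    have hD : √t * infDist x {y | g y = c} ≤ √(g x - c) :=
      (mul_le_mul_of_nonneg_left (infDist_le_dist_of_mem (show y ∈ {y | g y = c} from hyc))
        (Real.sqrt_nonneg t)).trans hy
    have := (Real.le_sqrt (mul_nonneg (Real.sqrt_nonneg t) infDist_nonneg)
      (sub_nonneg.2 (hc x))).1 hD
    rwa [mul_pow, Real.sq_sqrt ht.le] at this
  have hclosed : IsClosed {t : ℝ | t * infDist x {y | g y = c} ^ 2 ≤ g x - c} :=
    isClosed_le (by fun_prop) continuous_const
  refine hclosed.closure_subset_iff.2 hgrowth ?_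
  rw [closure_Ioo (by positivity)]
  exact right_mem_Icc.2 (by positivity)

theorem stmt_18_general {m : ℕ} (g : EuclideanSpace ℝ (Fin m) → ℝ)
    (hg : ContDiff ℝ 1 g) (hbdd : BddBelow (Set.range g))
    (μ : ℝ) (hμ : 0 < μ)
    (hPL : ∀ x, 2 * μ * (g x - ⨅ y, g y) ≤ ‖gradient g x‖ ^ 2) :
    ∀ x : EuclideanSpace ℝ (Fin m),
      μ / 2 * Metric.infDist x {x' | g x' = ⨅ y, g y} ^ 2 ≤ g x - ⨅ y, g y ∧
      Metric.infDist x {x' | g x' = ⨅ y, g y} ≤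
        Real.sqrt (2 / μ) * Real.sqrt (g x - ⨅ y, g y) := by
  intro x
  have hgrowth := mul_infDist_sq_le_of_PL (hg.differentiable one_ne_zero) hμ
    (fun z => ciInf_le hbdd z) hPL x
  refine ⟨hgrowth, ?_⟩
  have hgap : 0 ≤ g x - ⨅ y, g y := sub_nonneg.2 (ciInf_le hbdd x)
  rw [← Real.sqrt_mul (by positivity), Real.le_sqrt infDist_nonneg (by positivity),
    div_mul_eq_mul_div, le_div_iff₀ hμ]
  linarith

/-- If `g : ℝ^m → ℝ` is continuously differentiable, bounded below
with `g* = inf g` attained on the nonempty closed set `X* = argmin g = {x | g x = g*}`,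
and satisfies the PŁ condition `‖∇g(x)‖² ≥ 2μ(g(x) − g*)` with `μ > 0`, then `g`
satisfies quadratic growth: `g(x) − g* ≥ (μ/2)·dist(x,X*)²`, i.e.
`dist(x,X*) ≤ √(2/μ)·√(g(x) − g*)`. -/
theorem stmt_18 {m : ℕ} (g : EuclideanSpace ℝ (Fin m) → ℝ)
    (hg : ContDiff ℝ 1 g) (hbdd : BddBelow (Set.range g))
    (hattain : {x : EuclideanSpace ℝ (Fin m) | g x = ⨅ y, g y}.Nonempty)
    (hclosed : IsClosed {x : EuclideanSpace ℝ (Fin m) | g x = ⨅ y, g y})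
    (μ : ℝ) (hμ : 0 < μ)
    (hPL : ∀ x, 2 * μ * (g x - ⨅ y, g y) ≤ ‖gradient g x‖ ^ 2) :
    ∀ x : EuclideanSpace ℝ (Fin m),
      μ / 2 * Metric.infDist x {x' | g x' = ⨅ y, g y} ^ 2 ≤ g x - ⨅ y, g y ∧
      Metric.infDist x {x' | g x' = ⨅ y, g y} ≤
        Real.sqrt (2 / μ) * Real.sqrt (g x - ⨅ y, g y) :=
  stmt_18_general g hg hbdd μ hμ hPL
end
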